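/- Every element of a model can be written as an orthogonal: for every model M = ⟨C, S, {R_i}⟩ and every G ∈ M, there exists a set X_G of finite sequences over terms and μ-variables such that G = X_G ⤳ S. -/

import Mathlib

/-- λμ-terms: λ-variables, λ-abstraction, application, μ-abstraction, naming (a t). -/
inductive Trm : Type
  | var  : ℕ → Trm
  | lam  : ℕ → Trm → Trm
  | app  : Trm → Trm → Trm
  | mu   : ℕ → Trm → Trm
  | name : ℕ → Trm → Trm
deriving DecidableEq

/-- substitution of a λ-variable: t[x:=v] (respecting shadowing). -/
def subst (x : ℕ) (v : Trm) : Trm → Trm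
  | .var y => if y = x then v else .var y
  | .lam y t => .lam y (if y = x then t else subst x v t)
  | .app t u => .app (subst x v t) (subst x v u)
  | .mu b t => .mu b (subst x v t)
  | .name b t => .name b (subst x v t)

/-- μ-substitution t[a:=*v]: replace inductively each subterm (a w) by (a (w v)). -/
def msubst (a : ℕ) (v : Trm) : Trm → Trm
  | .var y => .var y
  | .lam y t => .lam y (msubst a v t)
  | .app t u => .app (msubst a v t) (msubst a v u)
  | .mu b t => .mu b (if b = a then t else msubst a v t)
  | .name b t =>
      if b = a then .name b (.app (msubst a v t) v) else .name b (msubst a v t)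

/-- One-step β and μ reduction, closed under all contexts. -/
inductive Red : Trm → Trm → Prop
  | beta (x : ℕ) (u v : Trm) : Red (.app (.lam x u) v) (subst x v u)
  | muR  (a : ℕ) (u v : Trm) : Red (.app (.mu a u) v) (.mu a (msubst a v u))
  | appL {t t'} (u : Trm) : Red t t' → Red (.app t u) (.app t' u)
  | appR (t : Trm) {u u'} : Red u u' → Red (.app t u) (.app t u')
  | lamC (x : ℕ) {t t'} : Red t t' → Red (.lam x t) (.lam x t')
  | muC  (a : ℕ) {t t'} : Red t t' → Red (.mu a t) (.mu a t')
  | nameC (a : ℕ) {t t'} : Red t t' → Red (.name a t) (.name a t')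

/-- Reflexive transitive closure of one-step reduction. -/
def Reds : Trm → Trm → Prop := Relation.ReflTransGen Red
/-- Simple types: propositional variables, ⊥ and →. -/
inductive Ty : Type
  | pvar : ℕ → Ty
  | bot  : Ty
  | arr  : Ty → Ty → Ty
deriving DecidableEq

/-- Contexts as partial functions from variables to types. -/
abbrev Ctx := ℕ → Option Ty

/-- Typing judgment Γ ⊢ t : A ; Δ of the simply typed λμ-calculus S_μ. -/
inductive Typ : Ctx → Trm → Ty → Ctx → Prop
  | ax {Γ : Ctx} {Δ : Ctx} {x A} : Γ x = some A → Typ Γ (.var x) A Δ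
  | arrI {Γ Δ x A B t} :
      Typ (Function.update Γ x (some A)) t B Δ → Typ Γ (.lam x t) (.arr A B) Δ
  | arrE {Γ Δ A B u v} :
      Typ Γ u (.arr A B) Δ → Typ Γ v A Δ → Typ Γ (.app u v) B Δ
  | muI {Γ Δ a A t} :
      Typ Γ t .bot (Function.update Δ a (some A)) → Typ Γ (.mu a t) A Δ
  | botE {Γ Δ a A t} :
      Δ a = some A → Typ Γ t A Δ → Typ Γ (.name a t) .bot Δ
/-- Elements of T' = terms ∪ μ-variables; sequences over T'. -/
abbrev TSeq := List (Trm ⊕ ℕ)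

/-- (t π): apply a term to a sequence of terms and μ-variables. -/
def applySeq : Trm → TSeq → Trm
  | t, [] => t
  | t, (Sum.inl u) :: π => applySeq (.app t u) π
  | t, (Sum.inr a) :: π => applySeq (.name a t) π

/-- X ⤳ S for a set X of sequences. -/
def seqArrow (X : Set TSeq) (S : Set Trm) : Set Trm :=
  {t | ∀ π ∈ X, applySeq t π ∈ S}

/-- K ⤳ L for sets of terms. -/
def setArrow (K L : Set Trm) : Set Trm := {t | ∀ u ∈ K, Trm.app t u ∈ L}

/-- S is saturated: closed under ▷*-expansion. -/
def Saturated (S : Set Trm) : Prop := ∀ u v : Trm, Reds v u → u ∈ S → v ∈ S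

/-- S is C-saturated. -/
def CSaturated (C : Set ℕ) (S : Set Trm) : Prop :=
  Saturated S ∧ ∀ t ∈ S, ∀ a ∈ C, Trm.mu a t ∈ S ∧ Trm.name a t ∈ S

/-- A model ⟨C, S, {R_i}⟩. -/
structure Model where
  C : Set ℕ
  C_inf : C.Infinite
  S : Set Trm
  S_sat : CSaturated C S
  Rs : Set (Set Trm)
  Rs_orth : ∀ R ∈ Rs, ∃ X : Set TSeq, R = seqArrow X S

/-- Membership in the model: smallest collection containing S and the Rᵢ,
closed under ⤳. -/
inductive Model.Mem (M : Model) : Set Trm → Prop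
  | base : M.Mem M.S
  | ri {R} : R ∈ M.Rs → M.Mem R
  | arr {G H} : M.Mem G → M.Mem H → M.Mem (setArrow G H)

/-- Extension of an interpretation of the propositional variables to all types. -/
def Model.interp (M : Model) (I : ℕ → Set Trm) : Ty → Set Trm
  | .pvar X => I X
  | .bot => M.S
  | .arr A B => setArrow (M.interp I A) (M.interp I B)

/-- I is an M-interpretation. -/
def Model.IsInterp (M : Model) (I : ℕ → Set Trm) : Prop := ∀ X, M.Mem (I X)

/-- G⊥ : the union of all X with G = X ⤳ S. -/
def orth (M : Model) (G : Set Trm) : Set TSeq :=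
  {π | ∃ X : Set TSeq, G = seqArrow X M.S ∧ π ∈ X}

/-- |A| : the intersection of I(A) over all models and all interpretations. -/
def SemTy (A : Ty) : Set Trm :=
  {t | ∀ (M : Model) (I : ℕ → Set Trm), M.IsInterp I → t ∈ M.interp I A}

theorem seqArrow_singleton_nil (S : Set Trm) : seqArrow {[]} S = S := by
  ext t
  simp [seqArrow, applySeq]

theorem setArrow_seqArrow (K : Set Trm) (X : Set TSeq) (S : Set Trm) :
    setArrow K (seqArrow X S) = seqArrow (Set.image2 (fun u π => Sum.inl u :: π) K X) S := by
  ext t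
  simp only [setArrow, seqArrow, Set.mem_ofPred_eq, Set.forall_mem_image2, applySeq]

/-- Every element of a model can be written as an orthogonal: G = X_G ⤳ S. -/
theorem model_mem_seqArrow (M : Model) (G : Set Trm) (hG : M.Mem G) :
    ∃ X : Set TSeq, G = seqArrow X M.S := by
  induction hG with
  | base => exact ⟨{[]}, (seqArrow_singleton_nil M.S).symm⟩
  | ri hR => exact M.Rs_orth _ hR
  | @arr K _ _ _ _ ihH =>
    obtain ⟨X, rfl⟩ := ihH
    exact ⟨_, setArrow_seqArrow K X M.S⟩
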